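/- arXiv:1801.09085 — 6 statements merged into one kernel-verified Lean document; each statement's English description precedes it below -/
import Mathlib

section
/- Let V be a real vector space whose dimension is countable (i.e., Module.rank ℝ V ≤ ℵ₀). Then a subset O of V is finite open if and only if O is norm-openable, i.e., there exists a norm N on V such that O is open in the topology induced by N. -/
/-!
A linear embedding of `V` into `ℕ →₀ ℝ` has a linear left inverse, along which `O` is pulled
back, and norms pull back along the embedding; this reduces the theorem to `V = ℕ →₀ ℝ`. There
the norm is a weighted ℓ¹-norm `∑ cₖ |xₖ|`. The trace of `O` on each `ℝⁿ` is open, hence a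
countable union of compact sets; each of these is put in at some stage `m ≥ n`, only finitely
many at each stage, together with a radius `δ` for which its `δ`-thickening in `ℝᵐ` stays in
`O`. The weights are then chosen one at a time: once `c₀, …, c_{m-1}` are fixed, the weighted
`δ`-neighbourhood in `ℝᵐ` of every compact set put in so far is a compact subset of `O`, hence
has a thickening in `ℝᵐ⁺¹` inside `O`, and a large enough `cₘ` confines the next
neighbourhoods to these thickenings.
-/

/-- `N` is a norm on the real vector space `V`. -/
def IsNorm {V : Type*} [AddCommGroup V] [Module ℝ V] (N : V → ℝ) : Prop :=
  (∀ x, 0 ≤ N x) ∧ (∀ x, N x = 0 ↔ x = 0) ∧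
    (∀ (a : ℝ) (x : V), N (a • x) = |a| * N x) ∧
    ∀ x y, N (x + y) ≤ N x + N y

/-- `O` is open for the metric topology induced by the norm `N`. -/
def NormOpen {V : Type*} [AddCommGroup V] (N : V → ℝ) (O : Set V) : Prop :=
  ∀ x ∈ O, ∃ ε > 0, ∀ y, N (y - x) < ε → y ∈ O

/-- `O` is finite open: its trace on every finite-dimensional subspace is open for the
canonical topology of that subspace (expressed via linear maps from `ℝⁿ`). -/
def FiniteOpen {V : Type*} [AddCommGroup V] [Module ℝ V] (O : Set V) : Prop :=
  ∀ (n : ℕ) (φ : (Fin n → ℝ) →ₗ[ℝ] V), IsOpen (φ ⁻¹' O)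

open Metric Set Function

section Norms

variable {V W : Type*} [AddCommGroup V] [Module ℝ V] [AddCommGroup W] [Module ℝ W]

def IsNorm.toSeminorm {N : V → ℝ} (hN : IsNorm N) : Seminorm ℝ V :=
  Seminorm.of N hN.2.2.2 fun a x => by rw [hN.2.2.1, Real.norm_eq_abs]

lemma IsNorm.continuous_comp {N : V → ℝ} (hN : IsNorm N) {E : Type*} [NormedAddCommGroup E]
    [NormedSpace ℝ E] [FiniteDimensional ℝ E] (φ : E →ₗ[ℝ] V) : Continuous (N ∘ φ) :=
  continuousOn_univ.mp ((hN.toSeminorm.comp φ).convexOn.continuousOn isOpen_univ)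

lemma NormOpen.finiteOpen {N : V → ℝ} {O : Set V} (hN : IsNorm N) (hO : NormOpen N O) :
    FiniteOpen O := by
  intro n φ
  refine isOpen_iff_mem_nhds.mpr fun a ha => ?_
  obtain ⟨ε, hε, hball⟩ := hO (φ a) ha
  have hcont : Continuous fun y => N (φ (y - a)) :=
    (hN.continuous_comp φ).comp (continuous_sub_right a)
  have hlt : N (φ (a - a)) < ε := by rwa [sub_self, map_zero, (hN.2.1 0).mpr rfl]
  filter_upwards [(isOpen_lt hcont continuous_const).mem_nhds hlt] with y hy
  exact hball _ (by rwa [← map_sub])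

lemma FiniteOpen.preimage {O : Set V} (hO : FiniteOpen O) (π : W →ₗ[ℝ] V) :
    FiniteOpen (π ⁻¹' O) :=
  fun n φ => hO n (π ∘ₗ φ)

lemma IsNorm.comp {N : W → ℝ} (hN : IsNorm N) {g : V →ₗ[ℝ] W} (hg : Injective g) :
    IsNorm (N ∘ g) := by
  obtain ⟨hnonneg, hzero, hsmul, hadd⟩ := hN
  refine ⟨fun x => hnonneg _, fun x => ?_, fun a x => ?_, fun x y => ?_⟩
  · simp [hzero, hg.eq_iff' (map_zero g)]
  · simp [hsmul]
  · simpa using hadd (g x) (g y)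

lemma NormOpen.preimage {N : W → ℝ} {U : Set W} (hU : NormOpen N U) (g : V →ₗ[ℝ] W) :
    NormOpen (N ∘ g) (g ⁻¹' U) := fun x hx => by
  obtain ⟨ε, hε, hball⟩ := hU (g x) hx
  exact ⟨ε, hε, fun y hy => hball (g y) (by simpa using hy)⟩

end Norms

lemma IsOpen.isSigmaCompact {X : Type*} [TopologicalSpace X] [LocallyCompactSpace X]
    [SecondCountableTopology X] {U : Set X} (hU : IsOpen U) : IsSigmaCompact U :=
  have := hU.locallyCompactSpace
  isSigmaCompact_iff_sigmaCompactSpace.mpr inferInstance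

theorem exists_forall_of_update {α : Type*} {P : ℕ → (ℕ → α) → Prop}
    (hP : ∀ m c c', (∀ k < m, c k = c' k) → P m c → P m c') {c₀ : ℕ → α} (h₀ : P 0 c₀)
    (hstep : ∀ m c, P m c → ∃ a, P (m + 1) (update c m a)) : ∃ c, ∀ m, P m c := by
  classical
  have hstep' : ∀ m c, ∃ a, P m c → P (m + 1) (update c m a) := fun m c => by
    by_cases h : P m c
    · obtain ⟨a, ha⟩ := hstep m c h
      exact ⟨a, fun _ => ha⟩
    · exact ⟨c m, fun h' => absurd h' h⟩
  choose a ha using hstep'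
  let s : ℕ → ℕ → α := fun m => Nat.rec c₀ (fun m s => update s m (a m s)) m
  have hs : ∀ m, P m (s m) := fun m => Nat.rec h₀ (fun m ih => ha m _ ih) m
  have hagree : ∀ m, ∀ k < m, s m k = s (k + 1) k := by
    intro m
    induction m with
    | zero => intro k hk; omega
    | succ m ih =>
      intro k hk
      rcases Nat.lt_succ_iff_lt_or_eq.mp hk with hk | rfl
      · change update (s m) m _ k = _
        rw [update_of_ne hk.ne, ih k hk]
      · rfl
  exact ⟨fun k => s (k + 1) k, fun m => hP m _ _ (hagree m) (hs m)⟩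

section Coordinates

noncomputable def finToFinsupp (m : ℕ) : (Fin m → ℝ) →ₗ[ℝ] ℕ →₀ ℝ :=
  Finsupp.lmapDomain ℝ ℝ Fin.val ∘ₗ (Finsupp.linearEquivFunOnFinite ℝ ℝ (Fin m)).symm.toLinearMap

lemma finToFinsupp_apply {m : ℕ} (v : Fin m → ℝ) (k : ℕ) :
    finToFinsupp m v k = if h : k < m then v ⟨k, h⟩ else 0 := by
  change Finsupp.mapDomain Fin.val (Finsupp.equivFunOnFinite.symm v) k = _
  split_ifs with h
  · simpa using Finsupp.mapDomain_apply Fin.val_injective (Finsupp.equivFunOnFinite.symm v) ⟨k, h⟩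
  · exact Finsupp.mapDomain_of_notMem_range _ _ fun ⟨i, hi⟩ => h (hi ▸ i.isLt)

lemma support_finToFinsupp_subset {m : ℕ} (v : Fin m → ℝ) :
    (finToFinsupp m v).support ⊆ Finset.range m := fun k hk => by
  by_contra hkm
  simp_all [finToFinsupp_apply]

lemma finToFinsupp_restrict {m : ℕ} {x : ℕ →₀ ℝ} (hx : x.support ⊆ Finset.range m) :
    finToFinsupp m (fun i => x i) = x := by
  ext k
  rw [finToFinsupp_apply]
  split_ifs with hk
  · rfl
  · exact (Finsupp.notMem_support_iff.mp fun h => hk (Finset.mem_range.mp (hx h))).symm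

noncomputable def padZero {n m : ℕ} (a : Fin n → ℝ) : Fin m → ℝ := fun i => finToFinsupp n a i

lemma padZero_apply {n m : ℕ} (a : Fin n → ℝ) (i : Fin m) :
    padZero a i = if h : (i : ℕ) < n then a ⟨i, h⟩ else 0 :=
  finToFinsupp_apply a i

lemma finToFinsupp_padZero {n m : ℕ} (h : n ≤ m) (a : Fin n → ℝ) :
    finToFinsupp m (padZero a) = finToFinsupp n a :=
  finToFinsupp_restrict ((support_finToFinsupp_subset a).trans (Finset.range_subset_range.mpr h))

lemma continuous_padZero {n m : ℕ} : Continuous (padZero : (Fin n → ℝ) → Fin m → ℝ) :=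
  continuous_pi fun i =>
    (Finsupp.lapply (i : ℕ) ∘ₗ finToFinsupp n).continuous_of_finiteDimensional

end Coordinates

section WeightedSum

noncomputable def weightedSum (c : ℕ → ℝ) {m : ℕ} (v : Fin m → ℝ) : ℝ :=
  ∑ i : Fin m, c i * |v i|

variable {c c' : ℕ → ℝ} {m : ℕ}

lemma weightedSum_congr (h : ∀ k < m, c k = c' k) (v : Fin m → ℝ) :
    weightedSum c v = weightedSum c' v :=
  Finset.sum_congr rfl fun i _ => by rw [h i i.isLt]

lemma weightedSum_nonneg (hc : ∀ k < m, 0 ≤ c k) (v : Fin m → ℝ) : 0 ≤ weightedSum c v :=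
  Finset.sum_nonneg fun i _ => mul_nonneg (hc i i.isLt) (abs_nonneg _)

lemma abs_le_weightedSum (hc : ∀ k < m, 1 ≤ c k) (v : Fin m → ℝ) (i : Fin m) :
    |v i| ≤ weightedSum c v :=
  calc |v i| ≤ c i * |v i| := le_mul_of_one_le_left (abs_nonneg _) (hc i i.isLt)
    _ ≤ weightedSum c v := Finset.single_le_sum (f := fun j : Fin m => c j * |v j|)
        (fun j _ => mul_nonneg (zero_le_one.trans (hc j j.isLt)) (abs_nonneg _))
        (Finset.mem_univ i)

lemma dist_le_weightedSum_sub (hc : ∀ k < m, 1 ≤ c k) (v w : Fin m → ℝ) :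
    dist v w ≤ weightedSum c (v - w) :=
  (dist_pi_le_iff (weightedSum_nonneg (fun k hk => zero_le_one.trans (hc k hk)) _)).mpr
    fun i => (Real.dist_eq _ _).trans_le (abs_le_weightedSum hc (v - w) i)

lemma weightedSum_succ (z : Fin (m + 1) → ℝ) :
    weightedSum c z = weightedSum c (Fin.init z) + c m * |z (Fin.last m)| :=
  Fin.sum_univ_castSucc _

lemma continuous_weightedSum (c : ℕ → ℝ) (m : ℕ) :
    Continuous (weightedSum c : (Fin m → ℝ) → ℝ) := by
  unfold weightedSum
  fun_prop

lemma isCompact_weightedSum_le (hc : ∀ k < m, 1 ≤ c k) (r : ℝ) :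
    IsCompact {v : Fin m → ℝ | weightedSum c v ≤ r} :=
  (isCompact_closedBall 0 r).of_isClosed_subset
    (isClosed_le (continuous_weightedSum c m) continuous_const)
    fun v hv => by simpa using (dist_le_weightedSum_sub hc v 0).trans (by simpa using hv)

end WeightedSum

section WeightedCthickening

def weightedCthickening (c : ℕ → ℝ) (δ : ℝ) {n : ℕ} (K : Set (Fin n → ℝ)) (m : ℕ) :
    Set (Fin m → ℝ) :=
  {w | ∃ a ∈ K, weightedSum c (w - padZero a) ≤ δ}

variable {c c' : ℕ → ℝ} {δ : ℝ} {n m : ℕ} {K : Set (Fin n → ℝ)}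

lemma weightedCthickening_congr (h : ∀ k < m, c k = c' k) :
    weightedCthickening c δ K m = weightedCthickening c' δ K m := by
  simp only [weightedCthickening, weightedSum_congr h]

lemma isCompact_weightedCthickening (hK : IsCompact K) (hc : ∀ k < m, 1 ≤ c k) :
    IsCompact (weightedCthickening c δ K m) := by
  have hrepr : weightedCthickening c δ K m =
      (fun p : (Fin n → ℝ) × (Fin m → ℝ) => padZero p.1 + p.2) ''
        (K ×ˢ {u | weightedSum c u ≤ δ}) := by
    ext w
    constructor
    · rintro ⟨a, ha, hw⟩
      exact ⟨(a, w - padZero a), ⟨ha, hw⟩, add_sub_cancel _ _⟩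
    · rintro ⟨⟨a, u⟩, ⟨ha, hu⟩, rfl⟩
      exact ⟨a, ha, by simpa using hu⟩
  rw [hrepr]
  exact (hK.prod (isCompact_weightedSum_le hc δ)).image
    ((continuous_padZero.comp continuous_fst).add continuous_snd)

lemma weightedCthickening_subset_cthickening (hc : ∀ k < m, 1 ≤ c k) :
    weightedCthickening c δ K m ⊆ cthickening δ (padZero '' K) := by
  rintro w ⟨a, ha, hw⟩
  exact mem_cthickening_of_dist_le w _ _ _ (mem_image_of_mem _ ha)
    ((dist_le_weightedSum_sub hc w _).trans hw)

lemma init_mem_weightedCthickening (hn : n ≤ m) (hc : ∀ k < m + 1, 0 ≤ c k)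
    {z : Fin (m + 1) → ℝ} (hz : z ∈ weightedCthickening c δ K (m + 1)) :
    Fin.init z ∈ weightedCthickening c δ K m ∧ c m * |z (Fin.last m)| ≤ δ := by
  obtain ⟨a, ha, hza⟩ := hz
  have hlast : (padZero a : Fin (m + 1) → ℝ) (Fin.last m) = 0 := by
    simp [padZero_apply, hn.not_gt]
  rw [weightedSum_succ, Pi.sub_apply, hlast, sub_zero] at hza
  have hinit : Fin.init (z - padZero a) = Fin.init z - padZero a := rfl
  rw [hinit] at hza
  have h₁ := weightedSum_nonneg (fun k hk => hc k (hk.trans m.lt_succ_self))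
    (Fin.init z - padZero a)
  have h₂ : 0 ≤ c m * |z (Fin.last m)| := mul_nonneg (hc m m.lt_succ_self) (abs_nonneg _)
  exact ⟨⟨a, ha, by linarith⟩, by linarith⟩

end WeightedCthickening

lemma IsCompact.exists_pos_forall_init_mem {m : ℕ} {K : Set (Fin m → ℝ)} (hK : IsCompact K)
    {U : Set (Fin (m + 1) → ℝ)} (hU : IsOpen U) (hKU : padZero '' K ⊆ U) :
    ∃ ρ > 0, ∀ z : Fin (m + 1) → ℝ, Fin.init z ∈ K → |z (Fin.last m)| ≤ ρ → z ∈ U := by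
  obtain ⟨ρ, hρ, hsub⟩ := (hK.image continuous_padZero).exists_cthickening_subset_open hU hKU
  refine ⟨ρ, hρ, fun z hz hlast => hsub (mem_cthickening_of_dist_le z _ _ _
    (mem_image_of_mem _ hz) ((dist_pi_le_iff hρ.le).mpr fun i => ?_))⟩
  rw [Real.dist_eq, padZero_apply]
  refine Fin.lastCases ?_ (fun j => ?_) i
  · simpa using hlast
  · simpa [Fin.init] using hρ.le

section WeightedL1

noncomputable def weightedL1 (c : ℕ → ℝ) (x : ℕ →₀ ℝ) : ℝ := x.sum fun k r => c k * |r|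

variable {c : ℕ → ℝ}

lemma weightedL1_eq_sum {x : ℕ →₀ ℝ} {s : Finset ℕ} (h : x.support ⊆ s) :
    weightedL1 c x = ∑ k ∈ s, c k * |x k| :=
  Finsupp.sum_of_support_subset x h _ fun _ _ => by simp

lemma weightedL1_finToFinsupp {m : ℕ} (v : Fin m → ℝ) :
    weightedL1 c (finToFinsupp m v) = weightedSum c v := by
  rw [weightedL1_eq_sum (support_finToFinsupp_subset v), ← Fin.sum_univ_eq_sum_range]
  simp [weightedSum, finToFinsupp_apply]

lemma isNorm_weightedL1 (hc : ∀ k, 0 < c k) : IsNorm (weightedL1 c) := by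
  have hterm : ∀ k r, 0 ≤ c k * |r| := fun k r => mul_nonneg (hc k).le (abs_nonneg r)
  refine ⟨fun x => ?_, fun x => ⟨fun hx => ?_, ?_⟩, fun a x => ?_, fun x y => ?_⟩
  · rw [weightedL1_eq_sum subset_rfl]
    exact Finset.sum_nonneg fun k _ => hterm k _
  · rw [weightedL1_eq_sum subset_rfl, Finset.sum_eq_zero_iff_of_nonneg fun k _ => hterm k _] at hx
    ext k
    by_contra hk
    exact hk (by simpa [(hc k).ne'] using hx k (Finsupp.mem_support_iff.mpr hk))
  · rintro rfl
    simp [weightedL1]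
  · rw [weightedL1_eq_sum Finsupp.support_smul, weightedL1_eq_sum subset_rfl, Finset.mul_sum]
    simp [abs_mul, mul_left_comm]
  · rw [weightedL1_eq_sum Finsupp.support_add, weightedL1_eq_sum Finset.subset_union_left,
      weightedL1_eq_sum Finset.subset_union_right, ← Finset.sum_add_distrib]
    refine Finset.sum_le_sum fun k _ => ?_
    rw [Finsupp.add_apply, ← mul_add]
    exact mul_le_mul_of_nonneg_left (abs_add_le _ _) (hc k).le

end WeightedL1

section WeightConstruction

variable {O : Set (ℕ →₀ ℝ)} {T : Type*} {dim stage : T → ℕ} {K : ∀ t, Set (Fin (dim t) → ℝ)}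
  {δ : T → ℝ}

variable (O stage K δ) in
def WeightInvariant (m : ℕ) (c : ℕ → ℝ) : Prop :=
  (∀ k < m, 1 ≤ c k) ∧
    ∀ t, stage t ≤ m → weightedCthickening c (δ t) (K t) m ⊆ finToFinsupp m ⁻¹' O

lemma WeightInvariant.congr {m : ℕ} {c c' : ℕ → ℝ} (h : ∀ k < m, c k = c' k)
    (hc : WeightInvariant O stage K δ m c) : WeightInvariant O stage K δ m c' :=
  ⟨fun k hk => h k hk ▸ hc.1 k hk, fun t ht => weightedCthickening_congr h ▸ hc.2 t ht⟩

lemma weightedCthickening_subset_of_stage_eq {t : T} {m : ℕ} {c : ℕ → ℝ}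
    (hδ : cthickening (δ t) (padZero '' K t : Set (Fin (stage t) → ℝ)) ⊆
      finToFinsupp (stage t) ⁻¹' O)
    (ht : stage t = m) (hc : ∀ k < m, 1 ≤ c k) :
    weightedCthickening c (δ t) (K t) m ⊆ finToFinsupp m ⁻¹' O := by
  subst ht
  exact (weightedCthickening_subset_cthickening hc).trans hδ

lemma WeightInvariant.exists_pos_forall_init_mem (hO : FiniteOpen O) {m : ℕ} {c : ℕ → ℝ}
    (hc : WeightInvariant O stage K δ m c) {t : T} (hK : IsCompact (K t)) (ht : stage t ≤ m) :
    ∃ ρ > 0, ∀ z : Fin (m + 1) → ℝ, Fin.init z ∈ weightedCthickening c (δ t) (K t) m →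
      |z (Fin.last m)| ≤ ρ → finToFinsupp (m + 1) z ∈ O :=
  (isCompact_weightedCthickening hK hc.1).exists_pos_forall_init_mem
    (U := finToFinsupp (m + 1) ⁻¹' O) (hO _ _) <| by
    rintro _ ⟨w, hw, rfl⟩
    rw [mem_preimage, finToFinsupp_padZero m.le_succ]
    exact hc.2 t ht hw

lemma WeightInvariant.exists_update (hO : FiniteOpen O) (hdim : ∀ t, dim t ≤ stage t)
    (hfin : ∀ m, {t | stage t ≤ m}.Finite) (hK : ∀ t, IsCompact (K t))
    (hδ : ∀ t, cthickening (δ t) (padZero '' K t : Set (Fin (stage t) → ℝ)) ⊆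
      finToFinsupp (stage t) ⁻¹' O)
    {m : ℕ} {c : ℕ → ℝ} (hc : WeightInvariant O stage K δ m c) :
    ∃ v, WeightInvariant O stage K δ (m + 1) (update c m v) := by
  have := (hfin m).to_subtype
  choose ρ hρpos hρ using fun t : {t | stage t ≤ m} =>
    hc.exists_pos_forall_init_mem hO (hK t) t.2
  -- only finitely many compact sets are in at stage `m`, so one weight serves them all
  obtain ⟨B, hB⟩ := (finite_range fun t : {t | stage t ≤ m} => δ t / ρ t).bddAbove
  set v := max 1 B
  have hv : ∀ k < m + 1, 1 ≤ update c m v k := fun k hk => by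
    rcases Nat.lt_succ_iff_lt_or_eq.mp hk with hk | rfl
    · rw [update_of_ne hk.ne]
      exact hc.1 k hk
    · simp [v]
  refine ⟨v, hv, fun t ht z hz => ?_⟩
  rcases ht.lt_or_eq with ht | ht
  · replace ht : stage t ≤ m := Nat.lt_succ_iff.mp ht
    obtain ⟨hinit, hlast⟩ := init_mem_weightedCthickening ((hdim t).trans ht)
      (fun k hk => zero_le_one.trans (hv k hk)) hz
    rw [weightedCthickening_congr fun k hk => update_of_ne hk.ne _ _] at hinit
    rw [update_self] at hlast
    have hvρ : δ t ≤ v * ρ ⟨t, ht⟩ := (div_le_iff₀ (hρpos _)).mp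
      ((hB ⟨⟨t, ht⟩, rfl⟩).trans (le_max_right _ _))
    exact hρ ⟨t, ht⟩ z hinit (le_of_mul_le_mul_left (hlast.trans hvρ)
      (zero_lt_one.trans_le (le_max_left _ _)))
  · exact weightedCthickening_subset_of_stage_eq (hδ t) ht hv hz

theorem exists_weights_of_compact_family (hO : FiniteOpen O) (hdim : ∀ t, dim t ≤ stage t)
    (hfin : ∀ m, {t | stage t ≤ m}.Finite) (hK : ∀ t, IsCompact (K t))
    (hKO : ∀ t, K t ⊆ finToFinsupp (dim t) ⁻¹' O) :
    ∃ c : ℕ → ℝ, (∀ k, 1 ≤ c k) ∧ ∃ δ : T → ℝ, (∀ t, 0 < δ t) ∧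
      ∀ t, ∀ a ∈ K t, ∀ x, weightedL1 c (x - finToFinsupp (dim t) a) ≤ δ t → x ∈ O := by
  have hδ : ∀ t, ∃ δ > 0, cthickening δ (padZero '' K t : Set (Fin (stage t) → ℝ)) ⊆
      finToFinsupp (stage t) ⁻¹' O := fun t =>
    ((hK t).image continuous_padZero).exists_cthickening_subset_open (hO _ _) (by
      rintro _ ⟨a, ha, rfl⟩
      rw [mem_preimage, finToFinsupp_padZero (hdim t)]
      exact hKO t ha)
  choose δ hδpos hδ using hδ
  obtain ⟨c, hc⟩ := exists_forall_of_update (P := WeightInvariant O stage K δ)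
    (fun _ _ _ h hc => hc.congr h) (c₀ := fun _ => 1)
    ⟨fun _ hk => absurd hk (Nat.not_lt_zero _), fun t ht =>
      weightedCthickening_subset_of_stage_eq (hδ t) (Nat.le_zero.mp ht) fun _ hk => by simp⟩
    fun _ _ hc => hc.exists_update hO hdim hfin hK hδ
  refine ⟨c, fun k => (hc (k + 1)).1 k k.lt_succ_self, δ, hδpos, fun t a ha x hx => ?_⟩
  obtain ⟨n, hn⟩ := x.support.exists_nat_subset_range
  set m := max n (stage t)
  have hxm : x.support ⊆ Finset.range m :=
    hn.trans (Finset.range_subset_range.mpr (le_max_left _ _))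
  rw [← finToFinsupp_restrict hxm]
  refine (hc m).2 t (le_max_right _ _) ⟨a, ha, ?_⟩
  rwa [← weightedL1_finToFinsupp, map_sub, finToFinsupp_restrict hxm,
    finToFinsupp_padZero ((hdim t).trans (le_max_right _ _))]

end WeightConstruction

theorem FiniteOpen.exists_isNorm_normOpen_finsupp {O : Set (ℕ →₀ ℝ)} (hO : FiniteOpen O) :
    ∃ N, IsNorm N ∧ NormOpen N O := by
  choose L hLc hLO using fun n => (hO n (finToFinsupp n)).isSigmaCompact
  obtain ⟨c, hc, δ, hδ, hball⟩ := exists_weights_of_compact_family (T := ℕ × ℕ) (dim := Prod.fst)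
    (stage := fun t => t.1 + t.2) (K := fun t => L t.1 t.2) hO (fun t => Nat.le_add_right _ _)
    (fun m => (finite_Iic (m, m)).subset fun t (ht : t.1 + t.2 ≤ m) =>
      Prod.le_def.mpr ⟨by omega, by omega⟩)
    (fun t => hLc _ _) (fun t => hLO t.1 ▸ subset_iUnion _ _)
  refine ⟨weightedL1 c, isNorm_weightedL1 fun k => one_pos.trans_le (hc k), fun x hx => ?_⟩
  obtain ⟨n, hn⟩ := x.support.exists_nat_subset_range
  have hxL : (fun i : Fin n => x i) ∈ ⋃ j, L n j := by
    rwa [hLO, mem_preimage, finToFinsupp_restrict hn]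
  obtain ⟨j, hj⟩ := mem_iUnion.mp hxL
  refine ⟨δ (n, j), hδ _, fun y hy => hball (n, j) _ hj y ?_⟩
  rw [finToFinsupp_restrict hn]
  exact hy.le

theorem stmt0 {V : Type*} [AddCommGroup V] [Module ℝ V]
    (hV : Module.rank ℝ V ≤ Cardinal.aleph0) (O : Set V) :
    FiniteOpen O ↔ ∃ N : V → ℝ, IsNorm N ∧ NormOpen N O := by
  refine ⟨fun hO => ?_, fun ⟨N, hN, hNO⟩ => hNO.finiteOpen hN⟩
  obtain ⟨g, hg⟩ : ∃ g : V →ₗ[ℝ] ℕ →₀ ℝ, Injective g :=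
    Module.Free.exists_linearMap_injective_of_linearIndependent_of_lift_rank_le
      (Finsupp.linearIndependent_single_one ℝ ℕ) (by simpa using hV)
  obtain ⟨π, hπ⟩ := g.exists_leftInverse_of_injective (LinearMap.ker_eq_bot.mpr hg)
  obtain ⟨N, hN, hNO⟩ := (hO.preimage π).exists_isNorm_normOpen_finsupp
  have hgπ : g ⁻¹' (π ⁻¹' O) = O := by
    rw [← preimage_comp, ← LinearMap.coe_comp, hπ, LinearMap.id_coe, preimage_id]
  exact ⟨N ∘ g, hN.comp hg, hgπ ▸ hNO.preimage g⟩
end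

section
/- Let V be a real vector space of uncountable dimension (Module.rank ℝ V > ℵ₀). Then the collection of norm-openable subsets of V is not a topology: there exists a family of norm-openable subsets of V whose union is not norm-openable. -/
namespace IsNorm

variable {V : Type*} [AddCommGroup V] [Module ℝ V] {N : V → ℝ}

lemma pos (hN : IsNorm N) {x : V} (hx : x ≠ 0) : 0 < N x :=
  (hN.1 x).lt_of_ne' (mt (hN.2.1 x).1 hx)

lemma smul (hN : IsNorm N) (a : ℝ) (x : V) : N (a • x) = |a| * N x :=
  hN.2.2.1 a x

lemma normOpen_ball (hN : IsNorm N) (x : V) (δ : ℝ) : NormOpen N {y | N (y - x) < δ} := by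
  intro y hy
  refine ⟨δ - N (y - x), sub_pos.2 hy, fun z hz => ?_⟩
  calc N (z - x) = N ((z - y) + (y - x)) := by rw [sub_add_sub_cancel]
    _ ≤ N (z - y) + N (y - x) := hN.2.2.2 _ _
    _ < δ := by linarith

lemma exists_pos_le_of_finite (hN : IsNorm N) {K : Set V} (hK : K.Finite) {x : V}
    (hx : x ∉ K) : ∃ δ > 0, ∀ z ∈ K, δ ≤ N (z - x) := by
  rcases K.eq_empty_or_nonempty with rfl | hne
  · exact ⟨1, one_pos, by simp⟩
  obtain ⟨z₀, hz₀, hmin⟩ := K.exists_min_image (fun z => N (z - x)) hK hne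
  exact ⟨_, hN.pos (sub_ne_zero.2 (ne_of_mem_of_not_mem hz₀ hx)), hmin⟩

end IsNorm

section NormOpenable

variable {V : Type*} [AddCommGroup V] [Module ℝ V]

lemma sUnion_normOpenable_subset_eq {U : Set V}
    (hU : ∀ x ∈ U, ∃ N, IsNorm N ∧ ∃ δ > 0, {y | N (y - x) < δ} ⊆ U) :
    ⋃₀ {O | (∃ N, IsNorm N ∧ NormOpen N O) ∧ O ⊆ U} = U := by
  refine (Set.sUnion_subset fun O hO => hO.2).antisymm fun x hx => ?_
  obtain ⟨N, hN, δ, hδ, hball⟩ := hU x hx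
  exact ⟨_, ⟨⟨N, hN, hN.normOpen_ball x δ⟩, hball⟩, by simpa [(hN.2.1 0).2 rfl] using hδ⟩

end NormOpenable

section WeightedNorm

variable {ι V : Type*} [AddCommGroup V] [Module ℝ V] (b : Module.Basis ι ℝ V) (w : ι → ℝ)

noncomputable def weightedNorm (v : V) : ℝ :=
  (b.repr v).sum fun i c => w i * |c|

lemma weightedNorm_eq_sum {v : V} {s : Finset ι} (hs : (b.repr v).support ⊆ s) :
    weightedNorm b w v = ∑ i ∈ s, w i * |b.repr v i| :=
  Finsupp.sum_of_support_subset _ hs _ (by simp)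

variable {w}

lemma mul_abs_repr_le_weightedNorm (hw : ∀ i, 0 ≤ w i) (v : V) (i : ι) :
    w i * |b.repr v i| ≤ weightedNorm b w v := by
  by_cases hi : b.repr v i = 0
  · rw [hi, abs_zero, mul_zero, weightedNorm_eq_sum b w subset_rfl]
    exact Finset.sum_nonneg fun j _ => mul_nonneg (hw j) (abs_nonneg _)
  · rw [weightedNorm_eq_sum b w subset_rfl]
    exact Finset.single_le_sum (fun j _ => mul_nonneg (hw j) (abs_nonneg _))
      (Finsupp.mem_support_iff.2 hi)

lemma isNorm_weightedNorm (hw : ∀ i, 0 < w i) : IsNorm (weightedNorm b w) := by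
  classical
  have hw₀ i : 0 ≤ w i := (hw i).le
  refine ⟨fun v => ?_, fun v => ⟨fun h => ?_, fun h => by simp [h, weightedNorm]⟩,
    fun a v => ?_, fun u v => ?_⟩
  · rw [weightedNorm_eq_sum b w subset_rfl]
    exact Finset.sum_nonneg fun i _ => mul_nonneg (hw₀ i) (abs_nonneg _)
  · by_contra hv
    obtain ⟨i, hi⟩ := Finsupp.support_nonempty_iff.2 (b.repr.map_ne_zero_iff.2 hv)
    have := mul_abs_repr_le_weightedNorm b hw₀ v i
    have := mul_pos (hw i) (abs_pos.2 (Finsupp.mem_support_iff.1 hi))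
    linarith
  · have hs : (b.repr (a • v)).support ⊆ (b.repr v).support := by
      rw [map_smul]
      exact Finsupp.support_smul
    rw [weightedNorm_eq_sum b w hs, weightedNorm_eq_sum b w subset_rfl, Finset.mul_sum]
    refine Finset.sum_congr rfl fun i _ => ?_
    rw [map_smul, Finsupp.smul_apply, smul_eq_mul, abs_mul, mul_left_comm]
  · set s := (b.repr u).support ∪ (b.repr v).support
    have hs : (b.repr (u + v)).support ⊆ s := by
      rw [map_add]
      exact Finsupp.support_add
    rw [weightedNorm_eq_sum b w hs, weightedNorm_eq_sum b w Finset.subset_union_left,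
      weightedNorm_eq_sum b w Finset.subset_union_right, ← Finset.sum_add_distrib]
    refine Finset.sum_le_sum fun i _ => ?_
    rw [map_add, Finsupp.add_apply, ← mul_add]
    exact mul_le_mul_of_nonneg_left (abs_add_le _ _) (hw₀ i)

end WeightedNorm

section CountablyPreceded

variable {ι : Type*}

def countablyPreceded (ι : Type*) : Set ι :=
  {i | {j | WellOrderingRel j i}.Countable}

lemma not_countable_countablyPreceded [Uncountable ι] : ¬ (countablyPreceded ι).Countable := by
  intro hc
  have hne : (countablyPreceded ι)ᶜ.Nonempty := by
    rw [Set.nonempty_compl]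
    rintro h
    exact not_countable (Set.countable_univ_iff.1 (h ▸ hc))
  obtain ⟨m, hm, hmin⟩ := WellOrderingRel.isWellOrder.wf.has_min _ hne
  exact hm (hc.mono fun j hj => by_contra fun hjG => hmin j hjG hj)

lemma exists_countablyPreceded_gt_of_countable [Uncountable ι] {A : Set ι} (hA : A.Countable)
    (hAG : A ⊆ countablyPreceded ι) :
    ∃ β ∈ countablyPreceded ι, ∀ α ∈ A, WellOrderingRel α β := by
  have hB : (⋃ α ∈ A, insert α {j | WellOrderingRel j α}).Countable :=
    hA.biUnion fun α hα => (hAG hα).insert α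
  obtain ⟨β, hβ, hβB⟩ := Set.not_subset.1 fun h => not_countable_countablyPreceded (hB.mono h)
  refine ⟨β, hβ, fun α hα => ?_⟩
  rcases trichotomous_of WellOrderingRel α β with h | rfl | h
  · exact h
  · exact absurd (Set.mem_biUnion hα (Set.mem_insert α _)) hβB
  · exact absurd (Set.mem_biUnion hα (Set.mem_insert_of_mem α h)) hβB

open Classical in
noncomputable def predIndex (β : ι) : ι → ℕ :=
  if h : β ∈ countablyPreceded ι then (Set.countable_iff_exists_injOn.1 h).choose else 0

lemma injOn_predIndex {β : ι} (hβ : β ∈ countablyPreceded ι) :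
    Set.InjOn (predIndex β) {α | WellOrderingRel α β} := by
  classical
  rw [predIndex, dif_pos hβ]
  exact (Set.countable_iff_exists_injOn.1 hβ).choose_spec

lemma exists_sublevel_predIndex_unbounded [Uncountable ι] (f : ι → ℝ) :
    ∃ C : ℝ, ∃ β ∈ countablyPreceded ι,
      ∀ M : ℕ, ∃ α, WellOrderingRel α β ∧ f α ≤ C ∧ M < predIndex β α := by
  set E : ℕ → Set ι := fun n => {i ∈ countablyPreceded ι | f i ≤ n}
  have hcover : countablyPreceded ι ⊆ ⋃ n, E n := fun i hi =>
    Set.mem_iUnion.2 ⟨⌈f i⌉₊, hi, Nat.le_ceil _⟩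
  obtain ⟨n, hn⟩ : ∃ n, ¬ (E n).Countable := by
    by_contra! h
    exact not_countable_countablyPreceded ((Set.countable_iUnion h).mono hcover)
  have hEinf : (E n).Infinite := fun h => hn h.countable
  set A : Set ι := Set.range fun k => (hEinf.natEmbedding _ k : ι)
  have hAE : A ⊆ E n := by
    rintro _ ⟨k, rfl⟩
    exact (hEinf.natEmbedding _ k).2
  have hAinf : A.Infinite := Set.infinite_range_of_injective fun k l h =>
    (hEinf.natEmbedding _).injective (Subtype.val_injective h)
  obtain ⟨β, hβ, hAβ⟩ :=
    exists_countablyPreceded_gt_of_countable (Set.countable_range _) fun a ha => (hAE ha).1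
  have hidx : (predIndex β '' A).Infinite :=
    hAinf.image ((injOn_predIndex hβ).mono fun α hα => hAβ α hα)
  refine ⟨n, β, hβ, fun M => ?_⟩
  obtain ⟨_, ⟨α, hα, rfl⟩, hM⟩ := hidx.exists_gt M
  exact ⟨α, hAβ α hα, (hAE hα).2, hM⟩

end CountablyPreceded

section Spokes

variable {ι V : Type*} [AddCommGroup V] [Module ℝ V] (b : Module.Basis ι ℝ V)

noncomputable def spoke (β α : ι) : V :=
  b β + ((predIndex β α : ℝ) + 1)⁻¹ • b α

def spokes : Set V :=
  {v | ∃ β ∈ countablyPreceded ι, ∃ α, WellOrderingRel α β ∧ spoke b β α = v}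

lemma repr_spoke (β α : ι) :
    b.repr (spoke b β α) = Finsupp.single β 1 + Finsupp.single α ((predIndex β α : ℝ) + 1)⁻¹ := by
  simp [spoke]

lemma basis_notMem_spokes (γ : ι) : b γ ∉ spokes b := by
  rintro ⟨β, -, α, hαβ, h⟩
  replace hαβ : α ≠ β := ne_of_irrefl hαβ
  by_cases hγ : γ = α
  · subst hγ
    simpa [repr_spoke, Ne.symm hαβ] using congrArg (fun v => b.repr v β) h
  · refine Nat.cast_add_one_ne_zero (R := ℝ) (predIndex β α) ?_
    simpa [repr_spoke, hαβ, hγ] using congrArg (fun v => b.repr v α) h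

lemma exists_isNorm_ball_subset_compl_spokes {x : V} (hx : x ∉ spokes b) :
    ∃ N, IsNorm N ∧ ∃ δ > 0, {y | N (y - x) < δ} ⊆ (spokes b)ᶜ := by
  set s := (b.repr x).support
  set w : ι → ℝ := fun i => 1 + ∑ β ∈ s, ((predIndex β i : ℝ) + 1)
  have hw i : 1 ≤ w i := le_add_of_nonneg_right (Finset.sum_nonneg fun _ _ => by positivity)
  have hw₀ i : 0 ≤ w i := zero_le_one.trans (hw i)
  set N := weightedNorm b w
  have hN : IsNorm N := isNorm_weightedNorm b fun i => zero_lt_one.trans_le (hw i)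
  have hfar β α (hαβ : α ≠ β) (hs : ¬ (β ∈ s ∧ α ∈ s)) : 1 ≤ N (spoke b β α - x) := by
    by_cases hβ : β ∈ s
    · have hα : b.repr x α = 0 := Finsupp.notMem_support_iff.1 fun hα => hs ⟨hβ, hα⟩
      have hwα : (predIndex β α : ℝ) + 1 ≤ w α := by
        have := Finset.single_le_sum (f := fun β => (predIndex β α : ℝ) + 1)
          (fun _ _ => by positivity) hβ
        simp only [w]
        linarith
      calc (1 : ℝ) = ((predIndex β α : ℝ) + 1) * ((predIndex β α : ℝ) + 1)⁻¹ :=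
            (mul_inv_cancel₀ (by positivity)).symm
        _ ≤ w α * |b.repr (spoke b β α - x) α| := by
            simp [repr_spoke, hα, hαβ]
            gcongr
            exact (abs_of_pos (by positivity)).le
        _ ≤ N _ := mul_abs_repr_le_weightedNorm b hw₀ _ α
    · calc (1 : ℝ) ≤ w β := hw β
        _ = w β * |b.repr (spoke b β α - x) β| := by
            simp [repr_spoke, Finsupp.notMem_support_iff.1 hβ, hαβ]
        _ ≤ N _ := mul_abs_repr_le_weightedNorm b hw₀ _ β
  set K := spokes b ∩ (fun p : ι × ι => spoke b p.1 p.2) '' (s ×ˢ s)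
  obtain ⟨δ, hδ, hδK⟩ := hN.exists_pos_le_of_finite (K := K)
    (((s.finite_toSet.prod s.finite_toSet).image _).inter_of_right _) fun h => hx h.1
  refine ⟨N, hN, min δ 1, lt_min hδ one_pos, ?_⟩
  rintro _ hy ⟨β, hβ, α, hαβ, rfl⟩
  refine not_le.2 (show N (spoke b β α - x) < min δ 1 from hy) ?_
  by_cases hs : β ∈ s ∧ α ∈ s
  · exact (min_le_left _ _).trans (hδK _ ⟨⟨β, hβ, α, hαβ, rfl⟩, (β, α), by simpa using hs, rfl⟩)
  · exact (min_le_right _ _).trans (hfar β α (ne_of_irrefl hαβ) hs)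

lemma not_normOpen_compl_spokes [Uncountable ι] {N : V → ℝ} (hN : IsNorm N) :
    ¬ NormOpen N (spokes b)ᶜ := by
  intro hopen
  obtain ⟨C, β, hβ, hlarge⟩ := exists_sublevel_predIndex_unbounded fun i => N (b i)
  obtain ⟨ε, hε, hball⟩ := hopen (b β) (basis_notMem_spokes b β)
  obtain ⟨M, hM⟩ := exists_nat_gt (C / ε)
  obtain ⟨α, hαβ, hCα, hMα⟩ := hlarge M
  refine hball (spoke b β α) ?_ ⟨β, hβ, α, hαβ, rfl⟩
  have hMα' : (M : ℝ) < predIndex β α + 1 := by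
    have : (M : ℝ) < predIndex β α := by exact_mod_cast hMα
    linarith
  calc N (spoke b β α - b β) = ((predIndex β α : ℝ) + 1)⁻¹ * N (b α) := by
        rw [spoke, add_sub_cancel_left, hN.smul, abs_of_pos (by positivity)]
    _ ≤ ((predIndex β α : ℝ) + 1)⁻¹ * C := by gcongr
    _ < ε := by
        rw [inv_mul_lt_iff₀ (by positivity)]
        exact (div_lt_iff₀ hε).1 (hM.trans hMα')

end Spokes

/-- If `V` has uncountable dimension, the collection of norm-openable subsets of
`V` is not a topology: some family of norm-openable sets has a union which is
not norm-openable. -/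
theorem stmt1 {V : Type*} [AddCommGroup V] [Module ℝ V]
    (hV : Cardinal.aleph0 < Module.rank ℝ V) :
    ∃ S : Set (Set V),
      (∀ U ∈ S, ∃ N : V → ℝ, IsNorm N ∧ NormOpen N U) ∧
      ¬ ∃ N : V → ℝ, IsNorm N ∧ NormOpen N (⋃₀ S) := by
  set b := Module.Free.chooseBasis ℝ V
  have : Uncountable (Module.Free.ChooseBasisIndex ℝ V) :=
    Cardinal.aleph0_lt_mk_iff.1 (Module.Free.rank_eq_card_chooseBasisIndex ℝ V ▸ hV)
  refine ⟨{O | (∃ N, IsNorm N ∧ NormOpen N O) ∧ O ⊆ (spokes b)ᶜ}, fun O hO => hO.1, ?_⟩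
  rw [sUnion_normOpenable_subset_eq fun x (hx : x ∈ (spokes b)ᶜ) =>
    exists_isNorm_ball_subset_compl_spokes b hx]
  rintro ⟨N, hN, hopen⟩
  exact not_normOpen_compl_spokes b hN hopen
end

section
/- Let V be a real vector space, let O be a finite open subset of V, let F be a finite-dimensional linear subspace of V equipped with a norm N, and assume that O contains the closed unit ball {x ∈ F : N(x) ≤ 1} of (F, N). Let x ∈ V \ F and set F' := F ⊕ ℝ·x (the subspace spanned by F and x). Then N extends to a norm N' on F' whose closed unit ball {y ∈ F' : N'(y) ≤ 1} is contained in O. -/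
/-! Identify `F ⊔ ℝ ∙ x` with `F × ℝ` via `(y, t) ↦ y + t • x`. Since `O` is finite open, its
preimage in `F × ℝ` is open, and it contains the compact set `B × {0}`, where `B` is the
closed unit ball of `N`; hence it contains a uniform thickening `B × [-ε, ε]`. The norm
`N' (y + t • x) = max (N y) (|t| / ε)` then extends `N`, with closed unit ball inside `O`. -/

open Function Metric Submodule

theorem isNorm_norm {W : Type*} [NormedAddCommGroup W] [NormedSpace ℝ W] :
    IsNorm (‖·‖ : W → ℝ) :=
  ⟨norm_nonneg, fun _ => norm_eq_zero,
    fun a x => (norm_smul a x).trans (by rw [Real.norm_eq_abs]), norm_add_le⟩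

theorem IsNorm.comp_linearMap {W W' : Type*} [AddCommGroup W] [Module ℝ W] [AddCommGroup W']
    [Module ℝ W'] {N : W' → ℝ} (hN : IsNorm N) (L : W →ₗ[ℝ] W') (hL : Injective L) :
    IsNorm (N ∘ L) := by
  obtain ⟨h_nonneg, h_eq_zero, h_smul, h_add⟩ := hN
  refine ⟨fun x => h_nonneg _, fun x => ?_, fun a x => ?_, fun x y => ?_⟩
  · rw [comp_apply, h_eq_zero, map_eq_zero_iff L hL]
  · rw [comp_apply, map_smul, h_smul, comp_apply]
  · rw [comp_apply, map_add]
    exact h_add _ _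

theorem IsNorm.normedSpaceCore {W : Type*} [AddCommGroup W] [Module ℝ W] [Norm W]
    (hN : IsNorm (‖·‖ : W → ℝ)) : NormedSpace.Core ℝ W where
  norm_nonneg := hN.1
  norm_eq_zero_iff := hN.2.1
  norm_smul a x := (hN.2.2.1 a x).trans (by rw [Real.norm_eq_abs])
  norm_triangle := hN.2.2.2

section FiniteOpen

variable {V : Type*} [AddCommGroup V] [Module ℝ V] {O : Set V}

theorem FiniteOpen.isOpen_preimage {W : Type*} [AddCommGroup W] [Module ℝ W]
    [TopologicalSpace W] [IsTopologicalAddGroup W] [ContinuousSMul ℝ W] [T2Space W]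
    [FiniteDimensional ℝ W] (hO : FiniteOpen O) (φ : W →ₗ[ℝ] V) :
    IsOpen (φ ⁻¹' O) := by
  let e := (Module.finBasis ℝ W).equivFun
  have hφ : φ ⁻¹' O = e ⁻¹' ((φ ∘ₗ e.symm.toLinearMap) ⁻¹' O) := by
    ext w
    simp
  rw [hφ]
  exact (hO _ _).preimage e.toLinearMap.continuous_of_finiteDimensional

theorem FiniteOpen.exists_pos_add_smul_mem {W : Type*} [NormedAddCommGroup W] [NormedSpace ℝ W]
    [FiniteDimensional ℝ W] (hO : FiniteOpen O) (φ : W →ₗ[ℝ] V) (x : V)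
    (hball : ∀ w, ‖w‖ ≤ 1 → φ w ∈ O) :
    ∃ ε > 0, ∀ w, ‖w‖ ≤ 1 → ∀ t : ℝ, ‖t‖ ≤ ε → φ w + t • x ∈ O := by
  let K : Set (W × ℝ) := closedBall 0 1 ×ˢ {0}
  have hK : IsCompact K := (isCompact_closedBall 0 1).prod isCompact_singleton
  have hKO : K ⊆ (φ.coprod (LinearMap.toSpanSingleton ℝ V x)) ⁻¹' O := by
    rintro ⟨w, _⟩ ⟨hw, rfl⟩
    simpa using hball w (mem_closedBall_zero_iff.1 hw)
  obtain ⟨δ, hδ, hthick⟩ := hK.exists_thickening_subset_open (hO.isOpen_preimage _) hKO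
  refine ⟨δ / 2, half_pos hδ, fun w hw t ht => ?_⟩
  have hwt : (w, t) ∈ thickening δ K := by
    refine mem_thickening_iff.2 ⟨(w, 0), ⟨mem_closedBall_zero_iff.2 hw, rfl⟩, ?_⟩
    rw [Prod.dist_eq, dist_self, dist_zero_right, max_eq_right (norm_nonneg t)]
    linarith
  simpa using hthick hwt

end FiniteOpen

section SupSpanSingleton

variable {K V : Type*} [Field K] [AddCommGroup V] [Module K V]

theorem Submodule.injective_subtype_coprod_toSpanSingleton {F : Submodule K V} {x : V}
    (hx : x ∉ F) : Injective (F.subtype.coprod (LinearMap.toSpanSingleton K V x)) := by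
  have hx0 : x ≠ 0 := fun h => hx (h ▸ F.zero_mem)
  rw [← LinearMap.ker_eq_bot, LinearMap.ker_coprod_of_disjoint_range, ker_subtype,
    LinearMap.ker_toSpanSingleton K hx0, prod_bot]
  rwa [range_subtype, LinearMap.range_toSpanSingleton, disjoint_span_singleton' hx0]

noncomputable def Submodule.prodEquivSupSpanSingleton (F : Submodule K V) {x : V} (hx : x ∉ F) :
    (F × K) ≃ₗ[K] (F ⊔ K ∙ x : Submodule K V) :=
  (LinearEquiv.ofInjective _ (injective_subtype_coprod_toSpanSingleton hx)).trans
    (LinearEquiv.ofEq _ _ (by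
      rw [LinearMap.range_coprod, range_subtype, LinearMap.range_toSpanSingleton]))

@[simp]
theorem Submodule.coe_prodEquivSupSpanSingleton_apply (F : Submodule K V) {x : V} (hx : x ∉ F)
    (p : F × K) : (F.prodEquivSupSpanSingleton hx p : V) = p.1 + p.2 • x :=
  rfl

end SupSpanSingleton

/-- A norm on a finite-dimensional subspace whose closed unit ball is included in a
finite open set `O` extends, after adjoining one more vector `x`, to a norm on
`F ⊕ ℝx` whose closed unit ball is still included in `O`. -/
theorem stmt4 {V : Type*} [AddCommGroup V] [Module ℝ V]
    (O : Set V) (hO : FiniteOpen O)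
    (F : Submodule ℝ V) [FiniteDimensional ℝ F]
    (N : F → ℝ) (hN : IsNorm N)
    (hball : ∀ y : F, N y ≤ 1 → (y : V) ∈ O)
    (x : V) (hx : x ∉ F) :
    ∃ N' : (F ⊔ Submodule.span ℝ {x} : Submodule ℝ V) → ℝ,
      IsNorm N' ∧
      (∀ y : F, N' (Submodule.inclusion le_sup_left y) = N y) ∧
      ∀ z : (F ⊔ Submodule.span ℝ {x} : Submodule ℝ V), N' z ≤ 1 → (z : V) ∈ O := by
  let : Norm F := ⟨N⟩
  have hcore : NormedSpace.Core ℝ F := IsNorm.normedSpaceCore hN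
  let := NormedAddCommGroup.ofCore hcore
  let := NormedSpace.ofCore hcore
  obtain ⟨ε, hε, hεO⟩ := hO.exists_pos_add_smul_mem F.subtype x hball
  have hεx : ε • x ∉ F := fun h => hx (by simpa [hε.ne'] using F.smul_mem ε⁻¹ h)
  let E : (F × ℝ) ≃ₗ[ℝ] (F ⊔ span ℝ {x} : Submodule ℝ V) :=
    (F.prodEquivSupSpanSingleton hεx).trans
      (LinearEquiv.ofEq _ _ (by rw [span_singleton_smul_eq hε.ne'.isUnit]))
  have hE (p : F × ℝ) : (E p : V) = p.1 + (p.2 * ε) • x := by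
    simp [E, mul_smul]
  refine ⟨(‖·‖) ∘ E.symm, isNorm_norm.comp_linearMap _ E.symm.injective, fun y => ?_,
    fun z hz => ?_⟩
  · have hy : E.symm (inclusion le_sup_left y) = (y, 0) :=
      E.symm_apply_eq.2 (Subtype.ext (by simp [hE]))
    simp only [comp_apply, hy, Prod.norm_mk, norm_zero, max_eq_left (norm_nonneg y)]
    rfl
  · obtain ⟨hy, hs⟩ := norm_prod_le_iff.1 hz
    rw [← E.apply_symm_apply z, hE]
    refine hεO _ hy _ ?_
    rw [norm_mul, Real.norm_of_nonneg hε.le]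
    exact mul_le_of_le_one_left hε.le hs
end

section
/- There exists a function F : ω₁ × ω₁ → ℕ, where ω₁ denotes the set of countable ordinals (the first uncountable ordinal), such that for all functions G : ω₁ → ℕ and H : ω₁ → ℕ there is a pair (α, β) ∈ ω₁ × ω₁ with F(α, β) > max(G(α), H(β)). -/
/-!
Let `α` be an uncountable linear order all of whose initial segments are countable, such as `ω₁`.
Fix for every `c` an injection `e c` of `Iic c` into `ℕ`, and code a pair by
`F a b = e (max a b) (min a b)`. If `F a b ≤ max (G a) (H b)` everywhere, some fiber `G ⁻¹' {n}`
is infinite, and a countably infinite part of it is bounded by some `b`, since otherwise the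
countably many countable segments below its elements would cover `α`. Then the
injection `e b` maps infinitely many points into `{0, …, max n (H b)}`, which is absurd.
-/

open Set

theorem exists_infinite_fiber_of_uncountable {α β : Type*} [Uncountable α] [Countable β]
    (G : α → β) : ∃ n, (G ⁻¹' {n}).Infinite := by
  by_contra! hfin
  have hcover : (univ : Set α) ⊆ ⋃ n, G ⁻¹' {n} := fun a _ => mem_iUnion.2 ⟨G a, rfl⟩
  exact not_countable (countable_univ_iff.mp
    ((countable_iUnion fun n => (hfin n).countable).mono hcover))

section CountableInitialSegments

variable {α : Type*} [LinearOrder α] [Uncountable α]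

theorem Set.Countable.bddAbove_of_countable_Iio (hIio : ∀ a : α, (Iio a).Countable)
    {s : Set α} (hs : s.Countable) : BddAbove s := by
  by_contra hunb
  have hcover : (univ : Set α) ⊆ ⋃ t ∈ s, Iio t := fun a _ => by
    obtain ⟨t, ht, hat⟩ := not_bddAbove_iff.mp hunb a
    exact mem_biUnion ht hat
  exact not_countable (countable_univ_iff.mp
    ((hs.biUnion fun t _ => hIio t).mono hcover))

theorem Set.Infinite.exists_infinite_inter_Iic (hIio : ∀ a : α, (Iio a).Countable)
    {s : Set α} (hs : s.Infinite) : ∃ b, (s ∩ Iic b).Infinite := by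
  obtain ⟨t, hts, htc, hti⟩ := hs.exists_subset_countable_infinite
  obtain ⟨b, hb⟩ := htc.bddAbove_of_countable_Iio hIio
  exact ⟨b, hti.mono fun x hx => ⟨hts hx, hb hx⟩⟩

theorem exists_not_dominated_by_max_of_countable_Iio (hIio : ∀ a : α, (Iio a).Countable) :
    ∃ F : α → α → ℕ, ∀ G H : α → ℕ, ∃ a b, max (G a) (H b) < F a b := by
  have hIic : ∀ c, (Iic c).Countable := fun c => by
    simpa only [Iio_insert] using (hIio c).insert c
  choose e he using fun c => countable_iff_exists_injOn.mp (hIic c)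
  refine ⟨fun a b => e (a ⊔ b) (a ⊓ b), fun G H => ?_⟩
  by_contra! hdom
  obtain ⟨n, hn⟩ := exists_infinite_fiber_of_uncountable G
  obtain ⟨b, hb⟩ := hn.exists_infinite_inter_Iic hIio
  have hmaps : MapsTo (e b) (G ⁻¹' {n} ∩ Iic b) (Iic (max n (H b))) :=
    fun a ⟨(ha : G a = n), hab⟩ => by
      simpa [sup_eq_right.mpr hab, inf_eq_left.mpr hab, ha] using hdom a b
  have hinj : InjOn (e b) (G ⁻¹' {n} ∩ Iic b) := (he b).mono inter_subset_right
  exact infinite_of_injOn_mapsTo hinj hmaps hb (finite_Iic _)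

end CountableInitialSegments

open Ordinal in
theorem Ordinal.countable_Iio_iff {o : Ordinal.{u}} : (Iio o).Countable ↔ o < ω₁ := by
  rw [← Cardinal.le_aleph0_iff_set_countable, Cardinal.mk_Iio_ordinal, Cardinal.lift_le_aleph0,
    Cardinal.lt_omega_iff_card_lt, Cardinal.lt_aleph_one_iff]

open Ordinal in
/-- `𝒫(ω₁, ω₁)` fails: there is a function `F` on pairs of countable ordinals that is
dominated by no maximum `max (G α) (H β)` of functions of a single variable. -/
theorem stmt10 :
    ∃ F : {o : Ordinal.{0} // o < ω₁} → {o : Ordinal.{0} // o < ω₁} → ℕ,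
      ∀ (G H : {o : Ordinal.{0} // o < ω₁} → ℕ),
        ∃ α β, max (G α) (H β) < F α β := by
  have : Uncountable {o : Ordinal.{0} // o < ω₁} :=
    ⟨fun h => lt_irrefl ω₁ (countable_Iio_iff.mp (countable_coe_iff.mp h))⟩
  exact exists_not_dominated_by_max_of_countable_Iio fun o =>
    ((countable_Iio_iff.mpr o.2).preimage Subtype.val_injective).mono fun _ hx => hx
end

section
/- (Hathaway) Let X and Y be sets. Then every function f : X × Y → ℕ is separably dominated if and only if one of the following holds: (i) X or Y is finite; (ii) one of X, Y is countable and the other has cardinality strictly less than the bounding number 𝔟. -/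
universe u v

/-- The bounding number `𝔟`: the least cardinality of a subset of `ℕ → ℕ` that is
unbounded for eventual domination. -/
noncomputable def boundingNumber : Cardinal.{0} :=
  sInf {c : Cardinal.{0} | ∃ X : Set (ℕ → ℕ), Cardinal.mk X = c ∧
    ¬ ∃ g : ℕ → ℕ, ∀ f ∈ X, ∃ n : ℕ, ∀ k ≥ n, f k ≤ g k}

/-!
If `X` is countably infinite, say `X = ℕ`, then `f` amounts to the family `(f (·, y))_{y ∈ Y}` in
`ℕ → ℕ`, and a separable bound `max (G x) (H y)` is exactly a single `G` eventually dominating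
every member of the family (`H y` absorbs the finitely many exceptions). Hence all `f` are
separably dominated iff `#Y < 𝔟`.

If `X` and `Y` are both uncountable, restrict to `ω₁ × ω₁` and let `f (·, β)` enumerate the
countable set `{α | α < β}` injectively in `ℕ`. Given `G` and `H`, some fiber `G ⁻¹' {m}` is
uncountable, so it has infinitely many points below a single `β`; but there `f (·, β)` is
injective with values at most `max m (H β)`.
-/

open Cardinal Function Set

def SeparablyDominated (X Y : Type*) : Prop :=
  ∀ f : X × Y → ℕ, ∃ (G : X → ℕ) (H : Y → ℕ), ∀ x y, f (x, y) ≤ max (G x) (H y)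

namespace SeparablyDominated

variable {X Y : Type*}

theorem swap (h : SeparablyDominated X Y) : SeparablyDominated Y X := by
  intro f
  obtain ⟨G, H, hGH⟩ := h fun p => f (p.2, p.1)
  exact ⟨H, G, fun y x => max_comm (G x) (H y) ▸ hGH x y⟩

theorem of_injective {A B : Type*} {i : A → X} {j : B → Y} (hi : Injective i) (hj : Injective j)
    (h : SeparablyDominated X Y) : SeparablyDominated A B := by
  intro f
  obtain ⟨G, H, hGH⟩ := h (extend (Prod.map i j) f 0)
  refine ⟨G ∘ i, H ∘ j, fun a b => ?_⟩
  have := hGH (i a) (j b)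
  rwa [show (i a, j b) = Prod.map i j (a, b) from rfl, (hi.prodMap hj).extend_apply] at this

theorem of_finite_left [Finite X] : SeparablyDominated X Y := by
  intro f
  have := Fintype.ofFinite X
  exact ⟨0, fun y => Finset.univ.sup fun x => f (x, y), fun x y =>
    le_max_of_le_right (Finset.le_sup (f := fun x => f (x, y)) (Finset.mem_univ x))⟩

theorem of_finite_right [Finite Y] : SeparablyDominated X Y :=
  of_finite_left.swap

end SeparablyDominated

def IsEventuallyBounded (S : Set (ℕ → ℕ)) : Prop :=
  ∃ g : ℕ → ℕ, ∀ f ∈ S, ∃ n, ∀ k ≥ n, f k ≤ g k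

theorem boundingNumber_le_mk {S : Set (ℕ → ℕ)} (hS : ¬IsEventuallyBounded S) :
    boundingNumber ≤ #S :=
  csInf_le' ⟨S, rfl, hS⟩

theorem isEventuallyBounded_of_mk_lt {S : Set (ℕ → ℕ)} (h : #S < boundingNumber) :
    IsEventuallyBounded S :=
  by_contra fun hS => (boundingNumber_le_mk hS).not_gt h

theorem exists_not_isEventuallyBounded_mk_eq_boundingNumber :
    ∃ S : Set (ℕ → ℕ), ¬IsEventuallyBounded S ∧ #S = boundingNumber := by
  have univ_unbounded : ¬IsEventuallyBounded univ := fun ⟨g, hg⟩ => by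
    obtain ⟨n, hn⟩ := hg (g + 1) (mem_univ _)
    exact (hn n le_rfl).not_gt (Nat.lt_succ_self _)
  obtain ⟨S, hS, hunb⟩ := csInf_mem (s := {c : Cardinal.{0} | ∃ S : Set (ℕ → ℕ), #S = c ∧
    ¬IsEventuallyBounded S}) ⟨_, univ, rfl, univ_unbounded⟩
  exact ⟨S, hunb, hS⟩

theorem separablyDominated_nat_left {Y : Type v} (hY : #Y < lift.{v} boundingNumber) :
    SeparablyDominated ℕ Y := by
  intro f
  have hrange : #(range fun y n => f (n, y)) < boundingNumber := by
    have hle : lift.{v} #(range fun y n => f (n, y)) ≤ #Y := by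
      simpa using mk_range_le_lift (f := fun y n => f (n, y))
    exact lift_lt.mp (hle.trans_lt hY)
  obtain ⟨g, hg⟩ := isEventuallyBounded_of_mk_lt hrange
  choose N hN using fun y => hg _ ⟨y, rfl⟩
  refine ⟨g, fun y => (Finset.range (N y)).sup fun n => f (n, y), fun n y => ?_⟩
  rcases le_or_gt (N y) n with h | h
  · exact le_max_of_le_left (hN y n h)
  · exact le_max_of_le_right
      (Finset.le_sup (f := fun n => f (n, y)) (Finset.mem_range.mpr h))

theorem SeparablyDominated.of_countable_left {X : Type*} {Y : Type v} [Countable X]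
    (hY : #Y < lift.{v} boundingNumber) : SeparablyDominated X Y :=
  have ⟨_, he⟩ := exists_injective_nat X
  (separablyDominated_nat_left hY).of_injective he injective_id

theorem not_separablyDominated_nat_of_not_isEventuallyBounded {S : Set (ℕ → ℕ)}
    (hS : ¬IsEventuallyBounded S) : ¬SeparablyDominated ℕ S := by
  intro h
  obtain ⟨G, H, hGH⟩ := h fun p => p.2.1 p.1
  exact hS ⟨fun k => max (G k) k, fun s hs =>
    ⟨H ⟨s, hs⟩, fun k hk => (hGH k ⟨s, hs⟩).trans (max_le_max_left _ hk)⟩⟩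

theorem not_separablyDominated_of_countable_left {X : Type*} {Y : Type v} [Countable X]
    [Infinite X] (hY : lift.{v} boundingNumber ≤ #Y) : ¬SeparablyDominated X Y := by
  intro h
  obtain ⟨S, hunb, hS⟩ := exists_not_isEventuallyBounded_mk_eq_boundingNumber
  obtain ⟨j⟩ : Nonempty (S ↪ Y) := by
    rwa [← lift_mk_le', lift_uzero, hS]
  exact not_separablyDominated_nat_of_not_isEventuallyBounded hunb
    (h.of_injective (Infinite.natEmbedding X).injective j.injective)

theorem Set.countable_of_forall_finite_inter_Iio {α : Type*} [LinearOrder α] {A : Set α}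
    (h : ∀ w, (A ∩ Iio w).Finite) : A.Countable := by
  refine countable_iff_exists_injOn.mpr ⟨fun a => (A ∩ Iio a).ncard, StrictMonoOn.injOn ?_⟩
  intro a ha b hb hab
  refine ncard_lt_ncard (ssubset_iff_exists.mpr ⟨?_, a, ⟨ha, hab⟩, fun h => lt_irrefl a h.2⟩) (h b)
  exact fun c hc => ⟨hc.1, hc.2.trans hab⟩

theorem not_separablyDominated_self_of_countable_Iio {α : Type*} [LinearOrder α]
    [Uncountable α] (hIio : ∀ w : α, (Iio w).Countable) : ¬SeparablyDominated α α := by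
  classical
  intro h
  choose e he using fun w => @exists_injective_nat _ (hIio w).to_subtype
  obtain ⟨G, H, hGH⟩ := h fun p => if hp : p.1 < p.2 then e p.2 ⟨p.1, hp⟩ else 0
  obtain ⟨m, hm⟩ : ∃ m, ¬(G ⁻¹' {m}).Countable := by
    by_contra! hfib
    exact not_countable_univ ((countable_iUnion hfib).mono fun a _ => mem_iUnion.mpr ⟨G a, rfl⟩)
  obtain ⟨w, hw⟩ : ∃ w, (G ⁻¹' {m} ∩ Iio w).Infinite := by
    by_contra! hfin
    exact hm (countable_of_forall_finite_inter_Iio hfin)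
  refine hw (Finite.of_injOn (f := fun a => if hp : a < w then e w ⟨a, hp⟩ else 0)
    (t := Iic (max m (H w))) ?_ ?_ (finite_Iic _))
  · intro a ⟨ha, _⟩
    simpa [show G a = m from ha] using hGH a w
  · intro a ⟨_, ha⟩ b ⟨_, hb⟩ hab
    simp only [dif_pos (show a < w from ha), dif_pos (show b < w from hb)] at hab
    exact congrArg Subtype.val (he w hab)

theorem exists_injective_omega1 {X : Type*} [Uncountable X] :
    ∃ i : (ℵ₁ : Cardinal.{0}).ord.ToType → X, Injective i := by
  obtain ⟨i⟩ : Nonempty ((ℵ₁ : Cardinal.{0}).ord.ToType ↪ X) := by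
    rw [← lift_mk_le', mk_ord_toType]
    simp
  exact ⟨i, i.injective⟩

theorem not_separablyDominated_of_uncountable {X Y : Type*} [Uncountable X] [Uncountable Y] :
    ¬SeparablyDominated X Y := by
  let W := (ℵ₁ : Cardinal.{0}).ord.ToType
  have hW : #W = ℵ₁ := mk_ord_toType _
  have : Uncountable W := aleph0_lt_mk_iff.mp (hW ▸ aleph0_lt_aleph_one)
  have hIio (w : W) : (Iio w).Countable := by
    have hlt := mk_Iio_lt w (by rw [hW, Ordinal.type_toType])
    rw [hW, lt_aleph_one_iff] at hlt
    exact le_aleph0_iff_set_countable.mp hlt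
  obtain ⟨i, hi⟩ := exists_injective_omega1 (X := X)
  obtain ⟨j, hj⟩ := exists_injective_omega1 (X := Y)
  exact fun h => not_separablyDominated_self_of_countable_Iio hIio (h.of_injective hi hj)

/-- Hathaway's theorem: every `f : X × Y → ℕ` is separably dominated iff
`X` or `Y` is finite, or one of them is countable and the other has cardinality
less than the bounding number `𝔟`. -/
theorem stmt11 {X : Type u} {Y : Type v} :
    (∀ f : X × Y → ℕ, ∃ (G : X → ℕ) (H : Y → ℕ),
        ∀ (x : X) (y : Y), f (x, y) ≤ max (G x) (H y)) ↔
      (Finite X ∨ Finite Y ∨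
        (Countable X ∧ Cardinal.mk Y < Cardinal.lift.{v} boundingNumber) ∨
        (Countable Y ∧ Cardinal.mk X < Cardinal.lift.{u} boundingNumber)) := by
  change SeparablyDominated X Y ↔ _
  refine ⟨fun h => ?_, ?_⟩
  · by_contra! hR
    obtain ⟨hXinf, hYinf, hXb, hYb⟩ := hR
    by_cases hX : Countable X
    · exact not_separablyDominated_of_countable_left (hXb hX) h
    by_cases hY : Countable Y
    · exact not_separablyDominated_of_countable_left (hYb hY) h.swap
    have : Uncountable X := not_countable_iff.mp hX
    have : Uncountable Y := not_countable_iff.mp hY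
    exact not_separablyDominated_of_uncountable h
  · rintro (hX | hY | ⟨hX, hY⟩ | ⟨hY, hX⟩)
    · exact .of_finite_left
    · exact .of_finite_right
    · exact .of_countable_left hY
    · exact (SeparablyDominated.of_countable_left hX).swap
end

section
/- Let V be a real vector space with basis (e_k)_{k ∈ κ}, let N' be the supremum norm associated to this basis, and let (N_k)_{k ∈ κ} be norms on V with N' ≤ N_k pointwise for every k. For each k define B_k := {x ∈ V : N_k(x − e_k) < 1/3}, and set O := ⋃_{k ∈ κ} B_k. If N is a norm on V such that O is open in the topology induced by N, then N dominates every N_k: for each k ∈ κ there is a positive real c_k with N_k ≤ c_k · N pointwise. -/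
section IsNorm

variable {V : Type*} [AddCommGroup V] [Module ℝ V] {N M : V → ℝ}

lemma IsNorm.map_zero (hN : IsNorm N) : N 0 = 0 := (hN.2.1 0).2 rfl

lemma IsNorm.exists_le_mul_of_lt_of_lt (hN : IsNorm N) (hM : IsNorm M) {ε r : ℝ} (hε : 0 < ε)
    (h : ∀ v, M v < ε → N v < r) : ∃ c : ℝ, 0 < c ∧ ∀ x, N x ≤ c * M x := by
  have hr : 0 < r := hN.map_zero ▸ h 0 (hM.map_zero ▸ hε)
  refine ⟨2 * r / ε, by positivity, fun x => ?_⟩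
  by_cases hx : x = 0
  · simp [hx, hN.map_zero, hM.map_zero]
  have hMx : 0 < M x := (hM.1 x).lt_of_ne fun h0 => hx ((hM.2.1 x).1 h0.symm)
  set t := ε / (2 * M x)
  have ht : 0 < t := by positivity
  have hMt : M (t • x) = ε / 2 := by
    rw [hM.2.2.1, abs_of_pos ht]
    simp only [t]
    field_simp
  have hNt := h _ (by linarith)
  rw [hN.2.2.1, abs_of_pos ht, ← lt_div_iff₀' ht] at hNt
  calc N x ≤ r / t := hNt.le
    _ = 2 * r / ε * M x := by simp only [t]; field_simp

end IsNorm

lemma Module.Basis.abs_repr_le_iSup_abs_repr {V κ : Type*} [AddCommGroup V] [Module ℝ V]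
    (b : Module.Basis κ ℝ V) (x : V) (j : κ) : |b.repr x j| ≤ ⨆ i, |b.repr x i| := by
  refine le_ciSup (f := fun i => |b.repr x i|) ?_ j
  rw [Set.range_comp' abs]
  exact ((b.repr x).finite_range.image _).bddAbove

section BasisBalls

variable {V κ : Type*} [AddCommGroup V] [Module ℝ V] (b : Module.Basis κ ℝ V) (N : κ → V → ℝ)

/-- The set `O = ⋃ k, B_k` with `B_k = {x | N_k (x - e_k) < 1/3}`. -/
def basisBalls : Set V := ⋃ j, {x : V | N j (x - b j) < 1/3}

variable {b N}

lemma basis_mem_basisBalls {k : κ} (hN : IsNorm (N k)) : b k ∈ basisBalls b N :=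
  Set.mem_iUnion.2 ⟨k, by simp [hN.map_zero]⟩

variable (hcoord : ∀ (j : κ) (x : V) (i : κ), |b.repr x i| ≤ N j x)
include hcoord

lemma lt_of_basis_add_mem_basisBalls {k : κ} {v : V} (hv : b k + v ∈ basisBalls b N)
    (hvk : |b.repr v k| ≤ 2/3) : N k v < 1/3 := by
  obtain ⟨j, hj⟩ := Set.mem_iUnion.1 hv
  rw [Set.mem_ofPred_eq] at hj
  obtain rfl | hjk := eq_or_ne j k
  · simpa using hj
  have hcoord_k : b.repr (b k + v - b j) k = 1 + b.repr v k := by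
    simp [Module.Basis.repr_self, hjk, add_comm]
  have hlt : |1 + b.repr v k| < 1/3 := hcoord_k ▸ (hcoord j _ k).trans_lt hj
  have := abs_sub_abs_le_abs_sub (1 : ℝ) (-b.repr v k)
  rw [sub_neg_eq_add, abs_one, abs_neg] at this
  linarith

lemma lt_of_forall_basis_add_mem_basisBalls {k : κ} {M : V → ℝ} (hM : IsNorm M) {ε : ℝ}
    (hball : ∀ v, M v < ε → b k + v ∈ basisBalls b N) {v : V} (hv : M v < ε) :
    N k v < 1/3 := by
  refine lt_of_basis_add_mem_basisBalls hcoord (hball v hv) ?_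
  by_contra! hvk
  -- Shrink `v` until its `k`-th coordinate has modulus exactly `1/3`.
  set s := 1 / (3 * |b.repr v k|)
  have hs : 0 < s := by positivity
  have hs1 : s ≤ 1 := by rw [div_le_one (by positivity)]; linarith
  have hsk : |b.repr (s • v) k| = 1/3 := by
    rw [map_smul, Finsupp.smul_apply, smul_eq_mul, abs_mul, abs_of_pos hs]
    simp only [s]
    field_simp
  have hMs : M (s • v) < ε := by
    rw [hM.2.2.1, abs_of_pos hs]
    nlinarith [hM.1 v]
  have hNs := lt_of_basis_add_mem_basisBalls hcoord (hball _ hMs) (by rw [hsk]; norm_num)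
  linarith [hcoord k (s • v) k]

end BasisBalls

/-- Given a basis `(e_k)` of `V` and norms `N_k` each dominating the associated
supremum norm, set `B_k := {x | N_k(x - e_k) < 1/3}` and `O := ⋃ k, B_k`. Any norm
`N` for which `O` is open dominates every `N_k`. -/
theorem stmt16 {V : Type*} [AddCommGroup V] [Module ℝ V] {κ : Type*}
    (b : Module.Basis κ ℝ V) (N : κ → V → ℝ) (hN : ∀ k, IsNorm (N k))
    (hle : ∀ (k : κ) (x : V), (⨆ j, |b.repr x j|) ≤ N k x)
    (M : V → ℝ) (hM : IsNorm M)
    (hopen : NormOpen M (⋃ k, {x : V | N k (x - b k) < 1/3})) :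
    ∀ k, ∃ c : ℝ, 0 < c ∧ ∀ x, N k x ≤ c * M x := by
  intro k
  have hcoord : ∀ j x i, |b.repr x i| ≤ N j x :=
    fun j x i => (b.abs_repr_le_iSup_abs_repr x i).trans (hle j x)
  obtain ⟨ε, hε, hball⟩ := hopen _ (basis_mem_basisBalls (hN k))
  exact (hN k).exists_le_mul_of_lt_of_lt hM hε fun v =>
    lt_of_forall_basis_add_mem_basisBalls hcoord hM fun w hw =>
      hball (b k + w) (by rwa [add_sub_cancel_left])
end
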